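/- arXiv:solv-int/9701015 — 2 statements merged into one kernel-verified Lean document; each statement's English description precedes it below -/
import Mathlib

section
/- The Dunkl operators d_i := ∂/∂x_i + λ Σ_{j≠i} (1 − K_{i,j})/(x_i − x_j), acting on polynomials in x_1,…,x_N (where K_{i,j} exchanges variables x_i and x_j), pairwise commute: [d_i, d_j] = 0 for all i, j. -/
open MvPolynomial Finset

/-- The operator exchanging the variables `x i` and `x j` in `ℂ[x_1,…,x_N]`. -/
noncomputable def exchange (N : ℕ) (i j : Fin N) :
    MvPolynomial (Fin N) ℂ →ₗ[ℂ] MvPolynomial (Fin N) ℂ :=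
  (rename (Equiv.swap i j)).toLinearMap

/-- `d` is the family of Dunkl operators with parameter `lam`:
`d i f = ∂f/∂x_i + lam * Σ_{j ≠ i} (f - K_{i,j} f)/(x_i - x_j)`.  The defining
identity is stated with denominators cleared (multiplying through by
`∏_{j ≠ i} (x_i - x_j)`), which characterizes `d` uniquely since
`ℂ[x_1,…,x_N]` is an integral domain. -/
def IsDunkl (N : ℕ) (lam : ℂ)
    (d : Fin N → (MvPolynomial (Fin N) ℂ →ₗ[ℂ] MvPolynomial (Fin N) ℂ)) : Prop :=
  ∀ (i : Fin N) (f : MvPolynomial (Fin N) ℂ),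
    (∏ j ∈ univ.erase i, (X i - X j)) * d i f =
      (∏ j ∈ univ.erase i, (X i - X j)) * pderiv i f +
        lam • ∑ j ∈ univ.erase i,
          (∏ k ∈ (univ.erase i).erase j, (X i - X k)) * (f - exchange N i j f)

/-!
The commutator `D = d i ∘ d j - d j ∘ d i` is linear, kills constants and commutes with
multiplication by every `X n`, so it vanishes. For the last point, the commutation rules
`[d i, X i] = 1 + λ ∑_{l ≠ i} K_{i,l}` and `[d i, X k] = -λ K_{i,k}` (`k ≠ i`) reduce
`[D, X n]` to terms in which an exchange operator meets a Dunkl operator; these are moved past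
each other by the equivariance `d m ∘ K_{a,b} = K_{a,b} ∘ d (swap a b m)`, and cancel.
-/

section

variable {σ τ R : Type*} [CommRing R]

theorem prod_X_sub_X_ne_zero [IsDomain R] [Fintype σ] [DecidableEq σ] (i : σ) :
    ∏ j ∈ univ.erase i, (X i - X j : MvPolynomial σ R) ≠ 0 :=
  prod_ne_zero_iff.2 fun _ hj => sub_ne_zero.2 fun h => (ne_of_mem_erase hj) (X_injective h).symm

theorem rename_prod_X_sub_X (e : σ ≃ τ) (i : σ) (s : Finset σ) :
    rename e (∏ k ∈ s, (X i - X k : MvPolynomial σ R)) =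
      ∏ k ∈ s.map e.toEmbedding, (X (e i) - X k) := by
  simp [map_prod, prod_map]

end

section

variable {N : ℕ}

@[simp]
theorem exchange_apply (i j : Fin N) (f : MvPolynomial (Fin N) ℂ) :
    exchange N i j f = rename (Equiv.swap i j) f := rfl

theorem exchange_comm (i j : Fin N) (f : MvPolynomial (Fin N) ℂ) :
    exchange N i j f = exchange N j i f := by
  rw [exchange_apply, exchange_apply, Equiv.swap_comm]

theorem exchange_X_mul (i j k : Fin N) (f : MvPolynomial (Fin N) ℂ) :
    exchange N i j (X k * f) = X (Equiv.swap i j k) * exchange N i j f := by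
  simp

theorem rename_exchange (e : Equiv.Perm (Fin N)) (i j : Fin N) (f : MvPolynomial (Fin N) ℂ) :
    rename e (exchange N i j f) = exchange N (e i) (e j) (rename e f) := by
  simp only [exchange_apply, rename_rename, Equiv.swap_apply_apply]
  congr 2
  ext; simp

end

namespace IsDunkl

variable {N : ℕ} {lam : ℂ} {d : Fin N → (MvPolynomial (Fin N) ℂ →ₗ[ℂ] MvPolynomial (Fin N) ℂ)}

theorem apply_eq (hd : IsDunkl N lam d) {i : Fin N} {f g : MvPolynomial (Fin N) ℂ}
    (h : (∏ j ∈ univ.erase i, (X i - X j)) * g =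
      (∏ j ∈ univ.erase i, (X i - X j)) * pderiv i f +
        lam • ∑ j ∈ univ.erase i,
          (∏ k ∈ (univ.erase i).erase j, (X i - X k)) * (f - exchange N i j f)) :
    d i f = g :=
  mul_left_cancel₀ (prod_X_sub_X_ne_zero i) ((hd i f).trans h.symm)

theorem map_C (hd : IsDunkl N lam d) (i : Fin N) (c : ℂ) : d i (C c) = 0 :=
  hd.apply_eq (by simp)

theorem rename_apply (hd : IsDunkl N lam d) (e : Equiv.Perm (Fin N)) (i : Fin N)
    (f : MvPolynomial (Fin N) ℂ) : rename e (d i f) = d (e i) (rename e f) := by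
  refine (hd.apply_eq ?_).symm
  have h := congrArg (rename e) (hd i f)
  simp only [map_mul, map_add, map_smul, map_sum, map_sub, rename_prod_X_sub_X, rename_exchange,
    map_erase, map_univ_equiv, Equiv.coe_toEmbedding] at h
  rw [pderiv_rename e.injective, h]
  congr 2
  rw [show univ.erase (e i) = (univ.erase i).map e.toEmbedding by simp [map_erase], sum_map]
  simp [map_erase]

theorem map_exchange (hd : IsDunkl N lam d) (a b m : Fin N) (f : MvPolynomial (Fin N) ℂ) :
    d m (exchange N a b f) = exchange N a b (d (Equiv.swap a b m) f) := by
  have h := hd.rename_apply (Equiv.swap a b) (Equiv.swap a b m) f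
  rw [Equiv.swap_apply_self] at h
  rw [exchange_apply, exchange_apply, h]

theorem map_exchange_of_ne (hd : IsDunkl N lam d) {a b m : Fin N} (hma : m ≠ a) (hmb : m ≠ b)
    (f : MvPolynomial (Fin N) ℂ) : d m (exchange N a b f) = exchange N a b (d m f) := by
  rw [hd.map_exchange, Equiv.swap_apply_of_ne_of_ne hma hmb]

theorem map_X_self_mul (hd : IsDunkl N lam d) (i : Fin N) (f : MvPolynomial (Fin N) ℂ) :
    d i (X i * f) = X i * d i f + f + lam • ∑ l ∈ univ.erase i, exchange N i l f := by
  refine hd.apply_eq ?_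
  have hterm : ∀ l ∈ univ.erase i,
      (∏ k ∈ (univ.erase i).erase l, (X i - X k)) * (X i * f - exchange N i l (X i * f)) =
        X i * ((∏ k ∈ (univ.erase i).erase l, (X i - X k)) * (f - exchange N i l f)) +
          (∏ k ∈ univ.erase i, (X i - X k)) * exchange N i l f := by
    intro l hl
    rw [exchange_X_mul, Equiv.swap_apply_left, ← mul_prod_erase _ _ hl]
    ring
  rw [sum_congr rfl hterm, sum_add_distrib, ← mul_sum, ← mul_sum, pderiv_mul, pderiv_X_self]
  linear_combination (norm := skip) X i * hd i f
  simp only [smul_eq_C_mul]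
  ring

theorem map_X_mul_of_ne (hd : IsDunkl N lam d) {i k : Fin N} (hki : k ≠ i)
    (f : MvPolynomial (Fin N) ℂ) : d i (X k * f) = X k * d i f - lam • exchange N i k f := by
  refine hd.apply_eq ?_
  have hk : k ∈ univ.erase i := mem_erase.2 ⟨hki, mem_univ k⟩
  have hterm : ∀ l ∈ univ.erase i,
      (∏ m ∈ (univ.erase i).erase l, (X i - X m)) * (X k * f - exchange N i l (X k * f)) =
        X k * ((∏ m ∈ (univ.erase i).erase l, (X i - X m)) * (f - exchange N i l f)) -
          if l = k then (∏ m ∈ univ.erase i, (X i - X m)) * exchange N i k f else 0 := by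
    intro l hl
    split_ifs with hlk
    · rw [hlk, exchange_X_mul, Equiv.swap_apply_right, ← mul_prod_erase _ _ hk]
      ring
    · rw [exchange_X_mul, Equiv.swap_apply_of_ne_of_ne hki (Ne.symm hlk)]
      ring
  rw [sum_congr rfl hterm, sum_sub_distrib, ← mul_sum, sum_ite_eq' _ _ _, if_pos hk,
    pderiv_mul, pderiv_X_of_ne hki]
  linear_combination (norm := skip) X k * hd i f
  simp only [smul_eq_C_mul]
  ring

theorem map_sum_exchange (hd : IsDunkl N lam d) {i j : Fin N} (hij : i ≠ j)
    (p : MvPolynomial (Fin N) ℂ) :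
    d j (∑ l ∈ univ.erase i, exchange N i l p) =
      ∑ l ∈ univ.erase i, exchange N i l (d j p) + exchange N i j (d i p - d j p) := by
  have hj : j ∈ univ.erase i := mem_erase.2 ⟨hij.symm, mem_univ j⟩
  have hrest : ∀ l ∈ (univ.erase i).erase j, d j (exchange N i l p) = exchange N i l (d j p) :=
    fun l hl => hd.map_exchange_of_ne hij.symm (ne_of_mem_erase hl).symm p
  rw [map_sum, ← add_sum_erase _ _ hj, ← add_sum_erase _ _ hj, sum_congr rfl hrest,
    hd.map_exchange, Equiv.swap_apply_right, map_sub]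
  abel

theorem commutator_X_mul_of_ne (hd : IsDunkl N lam d) {i j n : Fin N} (hij : i ≠ j)
    (hni : n ≠ i) (hnj : n ≠ j) (p : MvPolynomial (Fin N) ℂ) :
    d i (d j (X n * p)) - d j (d i (X n * p)) = X n * (d i (d j p) - d j (d i p)) := by
  rw [hd.map_X_mul_of_ne hnj, hd.map_X_mul_of_ne hni, map_sub, map_sub, map_smul, map_smul,
    hd.map_X_mul_of_ne hni, hd.map_X_mul_of_ne hnj, hd.map_exchange_of_ne hij hni.symm,
    hd.map_exchange_of_ne hij.symm hnj.symm]
  ring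

theorem commutator_X_self_mul (hd : IsDunkl N lam d) {i j : Fin N} (hij : i ≠ j)
    (p : MvPolynomial (Fin N) ℂ) :
    d i (d j (X i * p)) - d j (d i (X i * p)) = X i * (d i (d j p) - d j (d i p)) := by
  rw [hd.map_X_mul_of_ne hij, hd.map_X_self_mul, map_sub, map_add, map_add, map_smul, map_smul,
    hd.map_X_self_mul, hd.map_X_mul_of_ne hij, hd.map_sum_exchange hij, hd.map_exchange,
    Equiv.swap_apply_right, exchange_comm j i, exchange_comm j i, map_sub]
  simp only [smul_eq_C_mul]
  ring

theorem commutator_X_mul (hd : IsDunkl N lam d) (i j n : Fin N) (p : MvPolynomial (Fin N) ℂ) :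
    d i (d j (X n * p)) - d j (d i (X n * p)) = X n * (d i (d j p) - d j (d i p)) := by
  rcases eq_or_ne i j with rfl | hij
  · rw [sub_self, sub_self, mul_zero]
  by_cases hni : n = i
  · subst hni
    exact hd.commutator_X_self_mul hij p
  by_cases hnj : n = j
  · subst hnj
    linear_combination -hd.commutator_X_self_mul hij.symm p
  exact hd.commutator_X_mul_of_ne hij hni hnj p

end IsDunkl

/-- The Dunkl operators pairwise commute: `[d_i, d_j] = 0`. -/
theorem dunkl_commute (N : ℕ) (lam : ℂ)
    (d : Fin N → (MvPolynomial (Fin N) ℂ →ₗ[ℂ] MvPolynomial (Fin N) ℂ))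
    (hd : IsDunkl N lam d) (i j : Fin N) (f : MvPolynomial (Fin N) ℂ) :
    d i (d j f) = d j (d i f) := by
  rw [← sub_eq_zero]
  induction f using MvPolynomial.induction_on with
  | C a => rw [hd.map_C, hd.map_C, map_zero, map_zero, sub_zero]
  | add p q hp hq =>
    simp only [map_add]
    linear_combination hp + hq
  | mul_X p n hp => rw [mul_comm, hd.commutator_X_mul, hp, mul_zero]
end

section
/- If σ ∈ S^m (the set of minimal-length coset representatives for a partition m), then for all 1 ≤ i ≤ N: σ(i) = #{j ≤ i : m_{σ(j)} ≥ m_{σ(i)}} + #{j > i : m_{σ(j)} > m_{σ(i)}}. -/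
/-!
For `m` antitone and `σ ∈ S^m`, `σ j ≤ σ i` holds exactly when `(m (σ j), -j)` is
lexicographically at least `(m (σ i), -i)`. Counting the `j` with `σ j ≤ σ i` gives `σ i + 1`,
and splitting that set by `j ≤ i` versus `i < j` gives the two terms of the formula.
-/

open Finset

/-- `σ ∈ S^m`: for `i < j` with `m_{σ(i)} = m_{σ(j)}` one has `σ(i) < σ(j)`. -/
def MemSm (N : ℕ) (m : Fin N → ℕ) (σ : Equiv.Perm (Fin N)) : Prop :=
  ∀ i j : Fin N, i < j → m (σ i) = m (σ j) → σ i < σ j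

theorem Equiv.Perm.card_filter_apply_le {N : ℕ} (σ : Equiv.Perm (Fin N)) (k : Fin N) :
    #{j | σ j ≤ k} = (k : ℕ) + 1 := by
  rw [← Fin.card_Iic]
  exact card_equiv σ (by simp)

theorem MemSm.apply_le_apply_iff {N : ℕ} {m : Fin N → ℕ} {σ : Equiv.Perm (Fin N)}
    (hσ : MemSm N m σ) (hm : Antitone m) (i j : Fin N) :
    σ j ≤ σ i ↔ m (σ i) < m (σ j) ∨ m (σ i) = m (σ j) ∧ j ≤ i := by
  constructor
  · intro h
    rcases (hm h).lt_or_eq with hlt | heq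
    · exact .inl hlt
    · exact .inr ⟨heq, not_lt.1 fun hij => (hσ i j hij heq).not_ge h⟩
  · rintro (hlt | ⟨heq, hji⟩)
    · exact (hm.reflect_lt hlt).le
    · rcases hji.lt_or_eq with hji | rfl
      · exact (hσ j i hji heq.symm).le
      · rfl

/-- For `σ ∈ S^m`, the value `σ(i)` (which is `(σ i : ℕ) + 1` in the paper's `1`-based
convention) equals `#{j ≤ i : m_{σ(j)} ≥ m_{σ(i)}} + #{j > i : m_{σ(j)} > m_{σ(i)}}`. -/
theorem Sm_position_formula (N : ℕ) (m : Fin N → ℕ) (hm : Antitone m)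
    (σ : Equiv.Perm (Fin N)) (hσ : MemSm N m σ) (i : Fin N) :
    (σ i : ℕ) + 1 =
      (univ.filter (fun j : Fin N => j ≤ i ∧ m (σ i) ≤ m (σ j))).card +
      (univ.filter (fun j : Fin N => i < j ∧ m (σ i) < m (σ j))).card := by
  rw [← σ.card_filter_apply_le, ← card_union_of_disjoint
    (disjoint_filter.2 fun j _ hle hlt => hlt.1.not_ge hle.1), ← filter_or]
  refine congrArg card (filter_congr fun j _ => ?_)
  rw [hσ.apply_le_apply_iff hm]
  omega
end
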